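/- Theorem 1 (property 1): Let k be the equal opportunity control. For every game (X, λ_w, p, G, v_q, v_u, ω) and every discriminatory equilibrium (c̄*, d*), every decision policy d̂ maximizing U_F(·, μ*_RE, f*_RE) over k(X, μ*_RE, f*_RE) satisfies the strict interval inclusion [min_{i∈{w,b}} AR(i, d̂, μ*_RE), max_{i∈{w,b}} AR(i, d̂, μ*_RE)] ⊊ [min_{i∈{w,b}} AR(i, d*, μ*_RE), max_{i∈{w,b}} AR(i, d*, μ*_RE)]. That is, the equal opportunity control brings gains to the discriminated group in any discriminatory equilibrium. -/

import Mathlib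

/-!
Formalization of the Coate–Loury statistical discrimination model with
machine-learning (contractible) beliefs, following Zhu,
"The Impact of Equal Opportunity on Statistical Discrimination".
-/

open scoped BigOperators
open MeasureTheory

noncomputable section

attribute [local instance] Classical.propDecidable

/-- Group identities `I = {w, b}`. -/
inductive GrpI
  | w
  | b
deriving DecidableEq

instance : Fintype GrpI := ⟨{GrpI.w, GrpI.b}, fun x => by cases x <;> simp⟩

/-- Classes `Y = {q, u}` (qualified / unqualified). -/
inductive Cls
  | q
  | u
deriving DecidableEq

instance : Fintype Cls := ⟨{Cls.q, Cls.u}, fun x => by cases x <;> simp⟩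

/-- A game `(X, λ_w, p, G, v_q, v_u, ω)` of the Coate–Loury model.  The set of
other features is the finite product `X = X_1 × ⋯ × X_N`, encoded as the pi type
`(j : Fin N) → Xs j`.  The statistical model (Assumption 1) is encoded through a
nonempty subset `Ysub ⊆ {1, …, N}` together with the factorization
`p(x | i, y) = pY(x_𝒴 | y) · pC(x_{-𝒴} | i, x_𝒴)`.  The cost distribution is
given by an everywhere positive density `g` with `∫ g = 1` and `∫ |c| g(c) dc < ∞`. -/
structure Game (N : ℕ) (Xs : Fin N → Type) [∀ j, Fintype (Xs j)]
    [∀ j, Nonempty (Xs j)] where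
  lamw : ℝ
  lamw_pos : 0 < lamw
  lamw_lt_one : lamw < 1
  Ysub : Finset (Fin N)
  Ysub_nonempty : Ysub.Nonempty
  pY : ((j : Ysub) → Xs j.1) → Cls → ℝ
  pC : GrpI → ((j : Fin N) → Xs j) → ℝ
  pY_pos : ∀ xY y, 0 < pY xY y
  pC_pos : ∀ i x, 0 < pC i x
  pY_sum : ∀ y, ∑ xY, pY xY y = 1
  pC_sum : ∀ (i : GrpI) (xY : (j : Ysub) → Xs j.1),
    ∑ x ∈ Finset.univ.filter
        (fun x : (j : Fin N) → Xs j => (fun j : Ysub => x j.1) = xY),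
      pC i x = 1
  g : ℝ → ℝ
  g_pos : ∀ c, 0 < g c
  g_int : Integrable g
  g_norm : (∫ c, g c) = 1
  g_abs_int : Integrable fun c => |c| * g c
  vq : ℝ
  vu : ℝ
  om : ℝ
  vq_pos : 0 < vq
  vu_pos : 0 < vu
  om_pos : 0 < om

section Policies

variable {N : ℕ} {Xs : Fin N → Type}

/-- A decision policy `d : I × X → [0,1]`. -/
def IsPolicy (d : GrpI → ((j : Fin N) → Xs j) → ℝ) : Prop :=
  ∀ i x, d i x ∈ Set.Icc (0 : ℝ) 1

/-- A decision policy when data is color-blind, `d_cb : X → [0,1]`. -/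
def IsCbPolicy (dcb : ((j : Fin N) → Xs j) → ℝ) : Prop :=
  ∀ x, dcb x ∈ Set.Icc (0 : ℝ) 1

/-- `S ⊆ {1, …, N}` has the dependence property for the belief `f`:
`f` depends on `(i, x)` only up to `(i, x_S)`. -/
def DepProp {I : Type} (f : I → ((j : Fin N) → Xs j) → ℝ)
    (S : Finset (Fin N)) : Prop :=
  ∀ (i : I) (x x' : (j : Fin N) → Xs j), (∀ j ∈ S, x j = x' j) → f i x = f i x'

/-- The minimal subset `Ŷ(f)` with the dependence property. -/
def minDep {I : Type} (f : I → ((j : Fin N) → Xs j) → ℝ) : Finset (Fin N) :=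
  Finset.univ.filter fun j => ∀ S : Finset (Fin N), DepProp f S → j ∈ S

variable [∀ j, Fintype (Xs j)]

/-- Full-support probability distributions on `I × X` (the set `Δ°(I × X)`). -/
def FullSupp (μ : GrpI → ((j : Fin N) → Xs j) → ℝ) : Prop :=
  (∀ i x, 0 < μ i x) ∧ ∑ i, ∑ x, μ i x = 1

/-- Beliefs valued in `(0, 1)`. -/
def OpenBelief (f : GrpI → ((j : Fin N) → Xs j) → ℝ) : Prop :=
  ∀ i x, f i x ∈ Set.Ioo (0 : ℝ) 1

/-- Acceptance rate of group `i`. -/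
def AR (i : GrpI) (d μ : GrpI → ((j : Fin N) → Xs j) → ℝ) : ℝ :=
  (∑ x, d i x * μ i x) / ∑ x, μ i x

/-- True positive rate of group `i`. -/
def TP (i : GrpI) (d μ f : GrpI → ((j : Fin N) → Xs j) → ℝ) : ℝ :=
  (∑ x, d i x * μ i x * f i x) / ∑ x, μ i x * f i x

/-- The equal opportunity control `k(X, μ, f)`. -/
def EOset (μ f : GrpI → ((j : Fin N) → Xs j) → ℝ) :
    Set (GrpI → ((j : Fin N) → Xs j) → ℝ) :=
  {d | IsPolicy d ∧ TP GrpI.w d μ f = TP GrpI.b d μ f}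

/-- The color-blind control: all color-blind decision policies. -/
def CBset : Set (GrpI → ((j : Fin N) → Xs j) → ℝ) :=
  {d | IsPolicy d ∧ ∀ x, d GrpI.w x = d GrpI.b x}

/-- The no proxies control: policies depending on `(i,x)` only through `x_{Ŷ(f)}`. -/
def NoProxies (_μ f : GrpI → ((j : Fin N) → Xs j) → ℝ) :
    Set (GrpI → ((j : Fin N) → Xs j) → ℝ) :=
  {d | IsPolicy d ∧
    ∀ i i' x x', (∀ j ∈ minDep f, x j = x' j) → d i x = d i' x'}

/-- `ℓ²` distance between decision policies. -/
def polDist (d d' : GrpI → ((j : Fin N) → Xs j) → ℝ) : ℝ :=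
  Real.sqrt (∑ i, ∑ x, (d i x - d' i x) ^ 2)

/-- `ℓ²` distance between pairs `(μ, f)`. -/
def pairDist (μ f μ' f' : GrpI → ((j : Fin N) → Xs j) → ℝ) : ℝ :=
  Real.sqrt ((∑ i, ∑ x, (μ i x - μ' i x) ^ 2) + ∑ i, ∑ x, (f i x - f' i x) ^ 2)

/-- `ℓ²` distance between strategy profiles `(c̄, d)`. -/
def profDist (c : GrpI → ℝ) (d : GrpI → ((j : Fin N) → Xs j) → ℝ)
    (c' : GrpI → ℝ) (d' : GrpI → ((j : Fin N) → Xs j) → ℝ) : ℝ :=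
  Real.sqrt ((∑ i, (c i - c' i) ^ 2) + ∑ i, ∑ x, (d i x - d' i x) ^ 2)

end Policies

/-- Upper hemicontinuity of a correspondence on a set. -/
def UpperHemicontinuousOnCorr {α β : Type*} [TopologicalSpace α] [TopologicalSpace β]
    (F : α → Set β) (S : Set α) : Prop :=
  ∀ a ∈ S, ∀ V : Set β, IsOpen V → F a ⊆ V → ∀ᶠ a' in nhdsWithin a S, F a' ⊆ V

/-- Lower hemicontinuity of a correspondence on a set. -/
def LowerHemicontinuousOnCorr {α β : Type*} [TopologicalSpace α] [TopologicalSpace β]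
    (F : α → Set β) (S : Set α) : Prop :=
  ∀ a ∈ S, ∀ V : Set β, IsOpen V → (F a ∩ V).Nonempty →
    ∀ᶠ a' in nhdsWithin a S, (F a' ∩ V).Nonempty

namespace Game

variable {N : ℕ} {Xs : Fin N → Type} [∀ j, Fintype (Xs j)] [∀ j, Nonempty (Xs j)]
variable (Γ : Game N Xs)

/-- Projection `x ↦ x_𝒴`. -/
def proj (x : (j : Fin N) → Xs j) : (j : Γ.Ysub) → Xs j.1 := fun j => x j.1

/-- `p(x | i, y) = p(x_𝒴 | y) · p(x_{-𝒴} | i, x_𝒴)`. -/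
def p (i : GrpI) (x : (j : Fin N) → Xs j) (y : Cls) : ℝ :=
  Γ.pY (Γ.proj x) y * Γ.pC i x

/-- Group probabilities `λ_w`, `λ_b = 1 - λ_w`. -/
def lam : GrpI → ℝ := fun i =>
  match i with
  | GrpI.w => Γ.lamw
  | GrpI.b => 1 - Γ.lamw

/-- The CDF `G` of the cost distribution. -/
def G (c : ℝ) : ℝ := ∫ t in Set.Iic c, Γ.g t

/-- The likelihood function `l(x) = p(x_𝒴 | q) / p(x_𝒴 | u)`. -/
def lhd (x : (j : Fin N) → Xs j) : ℝ :=
  Γ.pY (Γ.proj x) Cls.q / Γ.pY (Γ.proj x) Cls.u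

/-- The likelihood function on `X_𝒴`. -/
def lhdY (xY : (j : Γ.Ysub) → Xs j.1) : ℝ := Γ.pY xY Cls.q / Γ.pY xY Cls.u

/-- The set of likelihood values `{l_1 < … < l_n}`. -/
def LVset : Set ℝ := Set.range Γ.lhd

/-- The assumption that `1` is not a likelihood value
(equivalently, `WW` is single-peaked). -/
def OneNotLV : Prop := (1 : ℝ) ∉ Γ.LVset

/-- The largest likelihood value `l_n`. -/
def lmax : ℝ := sSup Γ.LVset

/-- `⌈ℓ⌉`: the smallest likelihood value `≥ ℓ`. -/
def lceil (ℓ : ℝ) : ℝ := sInf {v | v ∈ Γ.LVset ∧ ℓ ≤ v}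

/-- `⌈ℓ⌉⁻`: the next smallest likelihood value below `⌈ℓ⌉` (or `l_0 = 0`). -/
def lceilm (ℓ : ℝ) : ℝ := sSup (insert 0 {v | v ∈ Γ.LVset ∧ v < Γ.lceil ℓ})

/-- The smallest likelihood value `> ℓ`. -/
def lnext (ℓ : ℝ) : ℝ := sInf {v | v ∈ Γ.LVset ∧ ℓ < v}

/-- The true distribution of features `μ_RE` given cost thresholds `c̄`. -/
def muRE (c : GrpI → ℝ) (i : GrpI) (x : (j : Fin N) → Xs j) : ℝ :=
  Γ.lam i * (Γ.G (c i) * Γ.p i x Cls.q + (1 - Γ.G (c i)) * Γ.p i x Cls.u)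

/-- The true conditional probability (calibrated belief) `f_RE` given `c̄`. -/
def fRE (c : GrpI → ℝ) (i : GrpI) (x : (j : Fin N) → Xs j) : ℝ :=
  Γ.G (c i) * Γ.p i x Cls.q /
    (Γ.G (c i) * Γ.p i x Cls.q + (1 - Γ.G (c i)) * Γ.p i x Cls.u)

/-- Utility `U_i(c̄(i), d(i))` of the representative `i`-applicant. -/
def Uapp (i : GrpI) (ci : ℝ) (di : ((j : Fin N) → Xs j) → ℝ) : ℝ :=
  Γ.om * ∑ x, (Γ.G ci * Γ.p i x Cls.q + (1 - Γ.G ci) * Γ.p i x Cls.u) * di x -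
    ∫ t in Set.Iic ci, t * Γ.g t

/-- Firm utility `U_F(d, μ, f)`. -/
def UF (d μ f : GrpI → ((j : Fin N) → Xs j) → ℝ) : ℝ :=
  ∑ i, ∑ x, d i x * μ i x * (f i x * Γ.vq - (1 - f i x) * Γ.vu)

/-- The color-blind true distribution of features `μ_cb,RE`. -/
def mucbRE (c : GrpI → ℝ) (x : (j : Fin N) → Xs j) : ℝ :=
  Γ.muRE c GrpI.w x + Γ.muRE c GrpI.b x

/-- The color-blind true conditional probability `f_cb,RE`. -/
def fcbRE (c : GrpI → ℝ) (x : (j : Fin N) → Xs j) : ℝ :=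
  (Γ.muRE c GrpI.w x * Γ.fRE c GrpI.w x + Γ.muRE c GrpI.b x * Γ.fRE c GrpI.b x) /
    Γ.mucbRE c x

/-- Firm utility when data is color-blind. -/
def UFcb (dcb μcb fcb : ((j : Fin N) → Xs j) → ℝ) : ℝ :=
  ∑ x, dcb x * μcb x * (fcb x * Γ.vq - (1 - fcb x) * Γ.vu)

/-- `d(i | l_m)`: conditional acceptance probability at likelihood value `lv`. -/
def dcond (i : GrpI) (di : ((j : Fin N) → Xs j) → ℝ) (lv : ℝ) : ℝ :=
  (∑ x ∈ Finset.univ.filter (fun x => Γ.lhd x = lv), Γ.p i x Cls.q * di x) /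
    ∑ x ∈ Finset.univ.filter (fun x => Γ.lhd x = lv), Γ.p i x Cls.q

/-- The within-group policy `d(i)` is associated with the likelihood mixture `ℓ`. -/
def AssociatedWith (i : GrpI) (di : ((j : Fin N) → Xs j) → ℝ) (ℓ : ℝ) : Prop :=
  0 ≤ ℓ ∧ ℓ ≤ Γ.lmax ∧
    ∀ lv ∈ Γ.LVset,
      (Γ.lceil ℓ < lv → Γ.dcond i di lv = 1) ∧
      (lv = Γ.lceil ℓ →
        Γ.dcond i di lv = (Γ.lceil ℓ - ℓ) / (Γ.lceil ℓ - Γ.lceilm ℓ)) ∧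
      (lv < Γ.lceil ℓ → Γ.dcond i di lv = 0)

/-- A decision policy is fair if both within-group policies are associated with
the same likelihood mixture. -/
def Fair (d : GrpI → ((j : Fin N) → Xs j) → ℝ) : Prop :=
  ∃ ℓ, Γ.AssociatedWith GrpI.w (d GrpI.w) ℓ ∧ Γ.AssociatedWith GrpI.b (d GrpI.b) ℓ

/-- `WW(l_m) = ω ∑_{x_𝒴 : l(x_𝒴) > l_m} (p(x_𝒴|q) - p(x_𝒴|u))`. -/
def WWval (t : ℝ) : ℝ :=
  Γ.om * ∑ xY ∈ Finset.univ.filter (fun xY => t < Γ.lhdY xY),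
    (Γ.pY xY Cls.q - Γ.pY xY Cls.u)

/-- The piecewise-linear function `WW` interpolating the points `(l_m, WW(l_m))`. -/
def WW (ℓ : ℝ) : ℝ :=
  if Γ.lceil ℓ = Γ.lceilm ℓ then Γ.WWval (Γ.lceil ℓ)
  else
    (Γ.WWval (Γ.lceilm ℓ) * (Γ.lceil ℓ - ℓ) +
        Γ.WWval (Γ.lceil ℓ) * (ℓ - Γ.lceilm ℓ)) /
      (Γ.lceil ℓ - Γ.lceilm ℓ)

/-- `EĒ(l_m)`: the unique cost with `G(EĒ(l_m)) = 1 / ((v_q/v_u) l_m + 1)`. -/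
def EEbar (lv : ℝ) : ℝ := sInf {cc | 1 / (Γ.vq / Γ.vu * lv + 1) ≤ Γ.G cc}

/-- The correspondence `EE : [0, l_n] ⇒ ℝ`. -/
def EE (ℓ : ℝ) : Set ℝ :=
  if ℓ = 0 then Set.Ici (Γ.EEbar (Γ.lceil 0))
  else if ℓ = Γ.lmax then Set.Iic (Γ.EEbar Γ.lmax)
  else if ℓ ∈ Γ.LVset then Set.Icc (Γ.EEbar (Γ.lnext ℓ)) (Γ.EEbar ℓ)
  else {Γ.EEbar (Γ.lceil ℓ)}

/-- Each representative applicant's cost threshold is a best response to `d`. -/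
def BestResponds (c : GrpI → ℝ) (d : GrpI → ((j : Fin N) → Xs j) → ℝ) : Prop :=
  ∀ (i : GrpI) (c' : ℝ), Γ.Uapp i c' (d i) ≤ Γ.Uapp i (c i) (d i)

/-- An (un-controlled) equilibrium. -/
def IsEquilibrium (c : GrpI → ℝ) (d : GrpI → ((j : Fin N) → Xs j) → ℝ) : Prop :=
  IsPolicy d ∧ Γ.BestResponds c d ∧
    ∀ d', IsPolicy d' →
      Γ.UF d' (Γ.muRE c) (Γ.fRE c) ≤ Γ.UF d (Γ.muRE c) (Γ.fRE c)

/-- A `k`-controlled equilibrium, for the control `(μ, f) ↦ K μ f`. -/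
def IsControlledEq
    (K : (GrpI → ((j : Fin N) → Xs j) → ℝ) → (GrpI → ((j : Fin N) → Xs j) → ℝ) →
      Set (GrpI → ((j : Fin N) → Xs j) → ℝ))
    (c : GrpI → ℝ) (d : GrpI → ((j : Fin N) → Xs j) → ℝ) : Prop :=
  d ∈ K (Γ.muRE c) (Γ.fRE c) ∧ Γ.BestResponds c d ∧
    ∀ d' ∈ K (Γ.muRE c) (Γ.fRE c),
      Γ.UF d' (Γ.muRE c) (Γ.fRE c) ≤ Γ.UF d (Γ.muRE c) (Γ.fRE c)

/-- `𝒮_k(μ, f)`: firm-optimal policies under the control `K` at `(μ, f)`. -/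
def Smax
    (K : (GrpI → ((j : Fin N) → Xs j) → ℝ) → (GrpI → ((j : Fin N) → Xs j) → ℝ) →
      Set (GrpI → ((j : Fin N) → Xs j) → ℝ))
    (μ f : GrpI → ((j : Fin N) → Xs j) → ℝ) :
    Set (GrpI → ((j : Fin N) → Xs j) → ℝ) :=
  {d | d ∈ K μ f ∧ ∀ d' ∈ K μ f, Γ.UF d' μ f ≤ Γ.UF d μ f}

/-- A `k`-controlled `ε`-equilibrium. -/
def IsCtrlEpsEq
    (K : (GrpI → ((j : Fin N) → Xs j) → ℝ) → (GrpI → ((j : Fin N) → Xs j) → ℝ) →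
      Set (GrpI → ((j : Fin N) → Xs j) → ℝ))
    (ε : ℝ) (c : GrpI → ℝ) (d : GrpI → ((j : Fin N) → Xs j) → ℝ) : Prop :=
  ∃ μ f, FullSupp μ ∧ OpenBelief f ∧
    pairDist μ f (Γ.muRE c) (Γ.fRE c) ≤ ε ∧
    Γ.BestResponds c d ∧ d ∈ K μ f ∧ ∀ d' ∈ K μ f, Γ.UF d' μ f ≤ Γ.UF d μ f

/-- Best responses of applicants to a color-blind policy. -/
def BestRespondsCb (c : GrpI → ℝ) (dcb : ((j : Fin N) → Xs j) → ℝ) : Prop :=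
  ∀ (i : GrpI) (c' : ℝ), Γ.Uapp i c' dcb ≤ Γ.Uapp i (c i) dcb

/-- An equilibrium when data is color-blind (unrestricted control). -/
def IsCbEquilibrium (c : GrpI → ℝ) (dcb : ((j : Fin N) → Xs j) → ℝ) : Prop :=
  IsCbPolicy dcb ∧ Γ.BestRespondsCb c dcb ∧
    ∀ dcb', IsCbPolicy dcb' →
      Γ.UFcb dcb' (Γ.mucbRE c) (Γ.fcbRE c) ≤ Γ.UFcb dcb (Γ.mucbRE c) (Γ.fcbRE c)

/-- A `k_cb`-controlled equilibrium when data is color-blind. -/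
def IsCbControlledEq (K : Set (((j : Fin N) → Xs j) → ℝ)) (c : GrpI → ℝ)
    (dcb : ((j : Fin N) → Xs j) → ℝ) : Prop :=
  dcb ∈ K ∧ Γ.BestRespondsCb c dcb ∧
    ∀ dcb' ∈ K,
      Γ.UFcb dcb' (Γ.mucbRE c) (Γ.fcbRE c) ≤ Γ.UFcb dcb (Γ.mucbRE c) (Γ.fcbRE c)

end Game

/-- A control when data is color-blind: for each `X` and each
`(μ_cb, f_cb) ∈ Δ°(X) × (0,1)^X` it specifies a nonempty compact set of
color-blind decision policies. -/
structure CbControl : Type 1 where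
  sets : ∀ (N : ℕ) (Xs : Fin N → Type) [∀ j, Fintype (Xs j)] [∀ j, Nonempty (Xs j)],
    (((j : Fin N) → Xs j) → ℝ) → (((j : Fin N) → Xs j) → ℝ) →
      Set (((j : Fin N) → Xs j) → ℝ)
  nonempty : ∀ (N : ℕ) (Xs : Fin N → Type) [∀ j, Fintype (Xs j)]
    [∀ j, Nonempty (Xs j)] (μ f : ((j : Fin N) → Xs j) → ℝ),
    (∀ x, 0 < μ x) → (∑ x, μ x = 1) → (∀ x, f x ∈ Set.Ioo (0 : ℝ) 1) →
    (sets N Xs μ f).Nonempty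
  compact : ∀ (N : ℕ) (Xs : Fin N → Type) [∀ j, Fintype (Xs j)]
    [∀ j, Nonempty (Xs j)] (μ f : ((j : Fin N) → Xs j) → ℝ),
    (∀ x, 0 < μ x) → (∑ x, μ x = 1) → (∀ x, f x ∈ Set.Ioo (0 : ℝ) 1) →
    IsCompact (sets N Xs μ f)
  mem_policy : ∀ (N : ℕ) (Xs : Fin N → Type) [∀ j, Fintype (Xs j)]
    [∀ j, Nonempty (Xs j)] (μ f : ((j : Fin N) → Xs j) → ℝ),
    (∀ x, 0 < μ x) → (∑ x, μ x = 1) → (∀ x, f x ∈ Set.Ioo (0 : ℝ) 1) →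
    sets N Xs μ f ⊆ {dcb | IsCbPolicy dcb}

/-!
Both groups face the same ROC set: only the features in `𝒴` carry information about the class,
so averaging a policy over the other features moves it from one group to the other without
changing its true and false positive rates. An equilibrium policy maximizes, in each group `i`, the
linear functional `G(c̄ i) v_q T - (1 - G(c̄ i)) v_u F` on that set; in a discriminatory equilibrium
the group with the larger threshold has the steeper functional, and a single-crossing argument puts
its ROC point above the other group's in both coordinates. Under equal opportunity the firm uses a
common ROC point `Q` in both groups (equal true positive rates by the constraint, hence equal
minimal false positive rates), and `Q` maximizes the `λ`-weighted sum of the two functionals, which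
places it between the two equilibrium points. Acceptance rates `G T + (1 - G) F` are monotone in
the ROC point and strictly monotone in `T`, which gives the strict inclusion.
-/

open Set

lemma Finset.sum_update_sub_sum {ι α : Type*} [Fintype ι] [DecidableEq ι] (f : ι → α → ℝ)
    (d : ι → α) (i : ι) (a : α) :
    ∑ j, f j (Function.update d i a j) - ∑ j, f j (d j) = f i a - f i (d i) := by
  rw [← Finset.sum_sub_distrib, Finset.sum_eq_single i
    (fun j _ hj => by rw [Function.update_of_ne hj, sub_self]) (by simp)]
  simp

lemma GrpI.sum_eq_add {i i' : GrpI} (h : i ≠ i') (f : GrpI → ℝ) :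
    ∑ j, f j = f i + f i' := by
  have huniv : (Finset.univ : Finset GrpI) = {i, i'} := by
    ext j; cases i <;> cases i' <;> cases j <;> simp_all
  rw [huniv, Finset.sum_pair h]

lemma IsPolicy.update {N : ℕ} {Xs : Fin N → Type} {d : GrpI → ((j : Fin N) → Xs j) → ℝ}
    (hd : IsPolicy d) {e : ((j : Fin N) → Xs j) → ℝ} (he : IsCbPolicy e) (i : GrpI) :
    IsPolicy (Function.update d i e) := by
  intro j x
  rcases eq_or_ne j i with rfl | hj
  · simpa using he x
  · simpa [Function.update_of_ne hj] using hd j x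

lemma eq_of_forall_setIntegral_Iic_le {h : ℝ → ℝ} {β c : ℝ} (hh : Integrable h)
    (hpos : ∀ t < β, 0 < h t) (hneg : ∀ t, β < t → h t < 0)
    (hmax : ∀ c', ∫ t in Iic c', h t ≤ ∫ t in Iic c, h t) : c = β := by
  have hsub : ∀ a b, (∫ t in Iic b, h t) - ∫ t in Iic a, h t = ∫ t in a..b, h t :=
    fun a b => intervalIntegral.integral_Iic_sub_Iic hh.integrableOn hh.integrableOn
  rcases lt_trichotomy c β with hlt | rfl | hgt
  · have := intervalIntegral.intervalIntegral_pos_of_pos_on hh.intervalIntegrable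
      (fun t ht => hpos t ht.2) hlt
    linarith [hsub c β, hmax β]
  · rfl
  · have := intervalIntegral.intervalIntegral_pos_of_pos_on hh.neg.intervalIntegrable
      (fun t ht => neg_pos.2 (hneg t ht.1)) hgt
    simp only [Pi.neg_apply, intervalIntegral.integral_neg] at this
    linarith [hsub β c, hmax β]

lemma single_crossing {ah bh al bl x y : ℝ} (hal : 0 < al) (hbh : 0 < bh) (ha : al < ah)
    (hb : bh < bl) (hh : bh * y ≤ ah * x) (hl : al * x ≤ bl * y) : 0 ≤ x ∧ 0 ≤ y := by
  have hx : 0 ≤ x := by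
    by_contra! hx
    nlinarith [mul_le_mul_of_nonneg_left hh (hbh.trans hb).le,
      mul_le_mul_of_nonneg_left hl hbh.le, mul_lt_mul_of_pos_right ha hbh,
      mul_lt_mul_of_pos_left hb (hal.trans ha)]
  exact ⟨hx, by nlinarith [mul_nonneg hal.le hx]⟩

lemma le_of_weighted_add_le {w w' a a' b b' : ℝ} (hw : 0 ≤ w) (hw' : 0 < w') (ha : a' ≤ a)
    (h : w * a + w' * b ≤ w * a' + w' * b') : b ≤ b' :=
  le_of_mul_le_mul_left (by nlinarith [mul_le_mul_of_nonneg_left ha hw]) hw'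

def acceptanceRate (G : ℝ) (p : ℝ × ℝ) : ℝ := G * p.1 + (1 - G) * p.2

section acceptanceRate

variable {G G' : ℝ} {p q : ℝ × ℝ}

lemma acceptanceRate_mono_right (h0 : 0 ≤ G) (h1 : G ≤ 1) (hpq : p ≤ q) :
    acceptanceRate G p ≤ acceptanceRate G q := by
  unfold acceptanceRate
  nlinarith [mul_le_mul_of_nonneg_left hpq.1 h0, mul_le_mul_of_nonneg_left hpq.2 (sub_nonneg.2 h1)]

lemma acceptanceRate_lt_acceptanceRate_right (h0 : 0 < G) (h1 : G ≤ 1) (hpq : p ≤ q) (h : p.1 < q.1) :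
    acceptanceRate G p < acceptanceRate G q := by
  unfold acceptanceRate
  nlinarith [mul_lt_mul_of_pos_left h h0, mul_le_mul_of_nonneg_left hpq.2 (sub_nonneg.2 h1)]

lemma acceptanceRate_mono_left (hG : G ≤ G') (hp : p.2 ≤ p.1) :
    acceptanceRate G p ≤ acceptanceRate G' p := by
  unfold acceptanceRate
  nlinarith [mul_le_mul_of_nonneg_left hp (sub_nonneg.2 hG)]

end acceptanceRate

lemma uIcc_acceptanceRate_ssubset {Gl Gh : ℝ} {Pl Q Ph : ℝ × ℝ} (hGl : 0 < Gl) (hG : Gl < Gh)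
    (hGh : Gh < 1) (hPlQ : Pl ≤ Q) (hQPh : Q ≤ Ph) (hPl : Pl.2 ≤ Pl.1)
    (hB : Pl.1 - Pl.2 < Ph.1 - Ph.2) :
    uIcc (acceptanceRate Gh Q) (acceptanceRate Gl Q) ⊂
      uIcc (acceptanceRate Gh Ph) (acceptanceRate Gl Pl) := by
  have hGh0 : 0 < Gh := hGl.trans hG
  have hGl1 : Gl ≤ 1 := (hG.trans hGh).le
  have hPlPh : Pl ≤ Ph := hPlQ.trans hQPh
  have hT : Pl.1 < Ph.1 := by linarith [hPlPh.2]
  have hlo : acceptanceRate Gl Pl ≤ acceptanceRate Gl Q := acceptanceRate_mono_right hGl.le hGl1 hPlQ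
  have hlo' : acceptanceRate Gl Pl ≤ acceptanceRate Gh Q :=
    (acceptanceRate_mono_left hG.le hPl).trans (acceptanceRate_mono_right hGh0.le hGh.le hPlQ)
  have hhi : acceptanceRate Gh Q ≤ acceptanceRate Gh Ph := acceptanceRate_mono_right hGh0.le hGh.le hQPh
  have hhi' : acceptanceRate Gl Q ≤ acceptanceRate Gh Ph :=
    (acceptanceRate_mono_right hGl.le hGl1 hQPh).trans (acceptanceRate_mono_left hG.le (by linarith))
  rw [uIcc_of_ge (hlo.trans hhi'), uIcc]
  -- Either `Q` has a smaller true positive rate than `Ph`, and both new rates miss the top end,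
  -- or it has the same one, and both miss the bottom end.
  rcases hQPh.1.lt_or_eq with hlt | heq
  · refine Icc_ssubset_Icc_right (hlo.trans hhi') (le_inf hlo' hlo) (sup_lt_iff.2 ⟨?_, ?_⟩)
    · exact acceptanceRate_lt_acceptanceRate_right hGh0 hGh.le hQPh hlt
    · exact (acceptanceRate_lt_acceptanceRate_right hGl hGl1 hQPh hlt).trans_le
        (acceptanceRate_mono_left hG.le (by linarith))
  · refine Icc_ssubset_Icc_left (hlo.trans hhi') (lt_inf_iff.2 ⟨?_, ?_⟩) (sup_le hhi hhi')
    · exact (acceptanceRate_mono_left hG.le hPl).trans_lt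
        (acceptanceRate_lt_acceptanceRate_right hGh0 hGh.le hPlQ (heq ▸ hT))
    · exact acceptanceRate_lt_acceptanceRate_right hGl hGl1 hPlQ (heq ▸ hT)

namespace Game

variable {N : ℕ} {Xs : Fin N → Type} [∀ j, Fintype (Xs j)] [∀ j, Nonempty (Xs j)]
variable (Γ : Game N Xs)

lemma lam_pos (i : GrpI) : 0 < Γ.lam i := by
  cases i
  · exact Γ.lamw_pos
  · exact sub_pos.2 Γ.lamw_lt_one

lemma p_pos (i : GrpI) (x : (j : Fin N) → Xs j) (y : Cls) : 0 < Γ.p i x y :=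
  mul_pos (Γ.pY_pos _ y) (Γ.pC_pos i x)

lemma G_strictMono : StrictMono Γ.G := fun a b hab => by
  have hsub := intervalIntegral.integral_Iic_sub_Iic (μ := volume)
    Γ.g_int.integrableOn Γ.g_int.integrableOn (a := a) (b := b)
  have := intervalIntegral.intervalIntegral_pos_of_pos_on Γ.g_int.intervalIntegrable
    (fun t _ => Γ.g_pos t) hab
  simp only [G]
  linarith

lemma G_pos (a : ℝ) : 0 < Γ.G a :=
  (setIntegral_nonneg measurableSet_Iic fun t _ => (Γ.g_pos t).le).trans_lt
    (Γ.G_strictMono (sub_one_lt a))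

lemma G_lt_one (a : ℝ) : Γ.G a < 1 :=
  (Γ.G_strictMono (lt_add_one a)).trans_le <| Γ.g_norm ▸
    setIntegral_le_integral Γ.g_int (Filter.Eventually.of_forall fun t => (Γ.g_pos t).le)

/-- The conditional mean of `e` given `x_𝒴`, under the group-`i` law `pC i` of the remaining
features. -/
def fiberMean (i : GrpI) (e : ((j : Fin N) → Xs j) → ℝ) (xY : (j : Γ.Ysub) → Xs j.1) : ℝ :=
  ∑ x ∈ Finset.univ.filter (fun x => Γ.proj x = xY), Γ.pC i x * e x

lemma fiberMean_comp_proj (i : GrpI) (φ : ((j : Γ.Ysub) → Xs j.1) → ℝ)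
    (xY : (j : Γ.Ysub) → Xs j.1) : Γ.fiberMean i (fun x => φ (Γ.proj x)) xY = φ xY := by
  rw [fiberMean, Finset.sum_congr rfl fun x hx => by rw [(Finset.mem_filter.1 hx).2],
    ← Finset.sum_mul]
  convert one_mul (φ xY)
  exact Γ.pC_sum i xY

lemma sum_mul_p (i : GrpI) (e : ((j : Fin N) → Xs j) → ℝ) (y : Cls) :
    ∑ x, e x * Γ.p i x y = ∑ xY, Γ.pY xY y * Γ.fiberMean i e xY := by
  rw [← Finset.sum_fiberwise Finset.univ Γ.proj]
  refine Finset.sum_congr rfl fun xY _ => ?_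
  rw [fiberMean, Finset.mul_sum]
  refine Finset.sum_congr rfl fun x hx => ?_
  rw [Game.p, (Finset.mem_filter.1 hx).2]
  ring

lemma fiberMean_mem_Icc (i : GrpI) {e : ((j : Fin N) → Xs j) → ℝ} (he : IsCbPolicy e)
    (xY : (j : Γ.Ysub) → Xs j.1) : Γ.fiberMean i e xY ∈ Icc 0 1 := by
  refine ⟨Finset.sum_nonneg fun x _ => mul_nonneg (Γ.pC_pos i x).le (he x).1, ?_⟩
  calc Γ.fiberMean i e xY ≤ Γ.fiberMean i (fun _ => 1) xY :=
        Finset.sum_le_sum fun x _ => mul_le_mul_of_nonneg_left (he x).2 (Γ.pC_pos i x).le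
    _ = 1 := Γ.fiberMean_comp_proj i (fun _ => 1) xY

def acceptProb (i : GrpI) (e : ((j : Fin N) → Xs j) → ℝ) (y : Cls) : ℝ :=
  ∑ x, e x * Γ.p i x y

lemma acceptProb_fiberMean (i i' : GrpI) (e : ((j : Fin N) → Xs j) → ℝ) (y : Cls) :
    Γ.acceptProb i' (fun x => Γ.fiberMean i e (Γ.proj x)) y = Γ.acceptProb i e y := by
  simp only [acceptProb, sum_mul_p, fiberMean_comp_proj]

lemma acceptProb_const (i : GrpI) (s : ℝ) (y : Cls) : Γ.acceptProb i (fun _ => s) y = s := by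
  simp only [acceptProb, sum_mul_p, Γ.fiberMean_comp_proj i (fun _ => s), ← Finset.sum_mul,
    Γ.pY_sum, one_mul]

lemma acceptProb_mem_Icc (i : GrpI) {e : ((j : Fin N) → Xs j) → ℝ} (he : IsCbPolicy e)
    (y : Cls) : Γ.acceptProb i e y ∈ Icc 0 1 := by
  refine ⟨Finset.sum_nonneg fun x _ => mul_nonneg (he x).1 (Γ.p_pos i x y).le, ?_⟩
  calc Γ.acceptProb i e y ≤ Γ.acceptProb i (fun _ => 1) y :=
        Finset.sum_le_sum fun x _ => mul_le_mul_of_nonneg_right (he x).2 (Γ.p_pos i x y).le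
    _ = 1 := Γ.acceptProb_const i 1 y

def rocPt (i : GrpI) (e : ((j : Fin N) → Xs j) → ℝ) : ℝ × ℝ :=
  (Γ.acceptProb i e Cls.q, Γ.acceptProb i e Cls.u)

-- `IsCbPolicy e` only says `e : X → [0, 1]`; here `e` is a policy within a single group.
def roc : Set (ℝ × ℝ) := ⋃ i, Γ.rocPt i '' {e | IsCbPolicy e}

lemma rocPt_mem_roc (i : GrpI) {e : ((j : Fin N) → Xs j) → ℝ} (he : IsCbPolicy e) :
    Γ.rocPt i e ∈ Γ.roc :=
  mem_iUnion.2 ⟨i, e, he, rfl⟩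

/-- Averaging a policy over the features outside `𝒴` transports it between groups without
changing its ROC point. -/
lemma exists_rocPt_eq {p : ℝ × ℝ} (hp : p ∈ Γ.roc) (i : GrpI) :
    ∃ e, IsCbPolicy e ∧ Γ.rocPt i e = p := by
  obtain ⟨i', e, he, rfl⟩ := mem_iUnion.1 hp
  exact ⟨fun x => Γ.fiberMean i' e (Γ.proj x), fun x => Γ.fiberMean_mem_Icc i' he _,
    by simp only [rocPt, acceptProb_fiberMean]⟩

lemma diag_mem_roc {s : ℝ} (hs : s ∈ Icc 0 1) : (s, s) ∈ Γ.roc := by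
  simpa only [rocPt, acceptProb_const] using
    Γ.rocPt_mem_roc GrpI.w (e := fun _ => s) fun _ => hs

lemma snd_mem_Icc_of_mem_roc {p : ℝ × ℝ} (hp : p ∈ Γ.roc) : p.2 ∈ Icc 0 1 := by
  obtain ⟨e, he, rfl⟩ := Γ.exists_rocPt_eq hp GrpI.w
  exact Γ.acceptProb_mem_Icc GrpI.w he Cls.u

lemma integrable_mul_g : Integrable fun t => t * Γ.g t := by
  refine Γ.g_abs_int.mono' (aestronglyMeasurable_id.mul Γ.g_int.aestronglyMeasurable)
    (Filter.Eventually.of_forall fun t => ?_)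
  rw [Real.norm_eq_abs, abs_mul, abs_of_pos (Γ.g_pos t)]

lemma Uapp_eq (i : GrpI) (ci : ℝ) (e : ((j : Fin N) → Xs j) → ℝ) :
    Γ.Uapp i ci e = Γ.om * Γ.acceptProb i e Cls.u +
      ∫ t in Iic ci, (Γ.om * (Γ.acceptProb i e Cls.q - Γ.acceptProb i e Cls.u) - t) * Γ.g t := by
  have hint : ∫ t in Iic ci, (Γ.om * (Γ.acceptProb i e Cls.q - Γ.acceptProb i e Cls.u) - t) * Γ.g t
      = Γ.om * (Γ.acceptProb i e Cls.q - Γ.acceptProb i e Cls.u) * Γ.G ci -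
          ∫ t in Iic ci, t * Γ.g t := by
    simp only [sub_mul, G]
    rw [integral_sub (Γ.g_int.const_mul _).integrableOn Γ.integrable_mul_g.integrableOn,
      integral_const_mul, mul_assoc]
  have hsum : ∑ x, (Γ.G ci * Γ.p i x Cls.q + (1 - Γ.G ci) * Γ.p i x Cls.u) * e x =
      Γ.G ci * Γ.acceptProb i e Cls.q + (1 - Γ.G ci) * Γ.acceptProb i e Cls.u := by
    simp only [acceptProb, Finset.mul_sum, ← Finset.sum_add_distrib]
    exact Finset.sum_congr rfl fun x _ => by ring
  rw [hint, Uapp, hsum]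
  ring

lemma eq_of_bestResponds {c : GrpI → ℝ} {d : GrpI → ((j : Fin N) → Xs j) → ℝ}
    (hbr : Γ.BestResponds c d) (i : GrpI) :
    c i = Γ.om * ((Γ.rocPt i (d i)).1 - (Γ.rocPt i (d i)).2) := by
  set β := Γ.om * ((Γ.rocPt i (d i)).1 - (Γ.rocPt i (d i)).2)
  refine eq_of_forall_setIntegral_Iic_le (h := fun t => (β - t) * Γ.g t)
    (((Γ.g_int.const_mul β).sub Γ.integrable_mul_g).congr
      (Filter.Eventually.of_forall fun t => by simp only [Pi.sub_apply]; ring))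
    (fun t ht => mul_pos (sub_pos.2 ht) (Γ.g_pos t))
    (fun t ht => mul_neg_of_neg_of_pos (sub_neg.2 ht) (Γ.g_pos t)) fun c' => ?_
  have := hbr i c'
  rw [Uapp_eq, Uapp_eq] at this
  simpa [rocPt, β] using this

variable (c : GrpI → ℝ)

lemma weight_pos (i : GrpI) (x : (j : Fin N) → Xs j) :
    0 < Γ.G (c i) * Γ.p i x Cls.q + (1 - Γ.G (c i)) * Γ.p i x Cls.u :=
  add_pos (mul_pos (Γ.G_pos _) (Γ.p_pos i x _))
    (mul_pos (sub_pos.2 (Γ.G_lt_one _)) (Γ.p_pos i x _))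

lemma muRE_mul_fRE (i : GrpI) (x : (j : Fin N) → Xs j) :
    Γ.muRE c i x * Γ.fRE c i x = Γ.lam i * (Γ.G (c i) * Γ.p i x Cls.q) := by
  have := (Γ.weight_pos c i x).ne'
  rw [muRE, fRE]
  field_simp

lemma muRE_mul_one_sub_fRE (i : GrpI) (x : (j : Fin N) → Xs j) :
    Γ.muRE c i x * (1 - Γ.fRE c i x) = Γ.lam i * ((1 - Γ.G (c i)) * Γ.p i x Cls.u) := by
  have := (Γ.weight_pos c i x).ne'
  rw [muRE, fRE]
  field_simp
  ring

lemma AR_muRE (i : GrpI) (d : GrpI → ((j : Fin N) → Xs j) → ℝ) :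
    AR i d (Γ.muRE c) = acceptanceRate (Γ.G (c i)) (Γ.rocPt i (d i)) := by
  have hsum : ∀ e : ((j : Fin N) → Xs j) → ℝ, ∑ x, e x * Γ.muRE c i x =
      Γ.lam i * acceptanceRate (Γ.G (c i)) (Γ.rocPt i e) := fun e => by
    simp only [acceptanceRate, rocPt, acceptProb, Finset.mul_sum, ← Finset.sum_add_distrib]
    exact Finset.sum_congr rfl fun x _ => by rw [muRE]; ring
  have hone := hsum fun _ => 1
  simp only [one_mul, rocPt, acceptProb_const, acceptanceRate] at hone
  rw [AR, hsum, hone]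
  field_simp [(Γ.lam_pos i).ne']
  ring

lemma TP_muRE (i : GrpI) (d : GrpI → ((j : Fin N) → Xs j) → ℝ) :
    TP i d (Γ.muRE c) (Γ.fRE c) = (Γ.rocPt i (d i)).1 := by
  have hsum : ∀ e : ((j : Fin N) → Xs j) → ℝ, ∑ x, e x * (Γ.muRE c i x * Γ.fRE c i x) =
      Γ.lam i * Γ.G (c i) * Γ.acceptProb i e Cls.q := fun e => by
    simp only [muRE_mul_fRE, acceptProb, Finset.mul_sum]
    exact Finset.sum_congr rfl fun x _ => by ring
  have hone := hsum fun _ => 1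
  simp only [one_mul, acceptProb_const, mul_one] at hone
  simp only [TP, mul_assoc, hsum, hone, rocPt]
  field_simp [(Γ.lam_pos i).ne', (Γ.G_pos (c i)).ne']

def gain (i : GrpI) (p : ℝ × ℝ) : ℝ :=
  Γ.G (c i) * Γ.vq * p.1 - (1 - Γ.G (c i)) * Γ.vu * p.2

lemma UF_muRE (d : GrpI → ((j : Fin N) → Xs j) → ℝ) :
    Γ.UF d (Γ.muRE c) (Γ.fRE c) = ∑ i, Γ.lam i * Γ.gain c i (Γ.rocPt i (d i)) := by
  refine Finset.sum_congr rfl fun i _ => ?_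
  simp only [gain, rocPt, acceptProb, Finset.mul_sum, ← Finset.sum_sub_distrib]
  refine Finset.sum_congr rfl fun x _ => ?_
  linear_combination (d i x * Γ.vq) * Γ.muRE_mul_fRE c i x -
    (d i x * Γ.vu) * Γ.muRE_mul_one_sub_fRE c i x

lemma UF_update_sub (d : GrpI → ((j : Fin N) → Xs j) → ℝ) (i : GrpI)
    (e : ((j : Fin N) → Xs j) → ℝ) :
    Γ.UF (Function.update d i e) (Γ.muRE c) (Γ.fRE c) - Γ.UF d (Γ.muRE c) (Γ.fRE c) =
      Γ.lam i * (Γ.gain c i (Γ.rocPt i e) - Γ.gain c i (Γ.rocPt i (d i))) := by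
  rw [UF_muRE, UF_muRE, mul_sub]
  exact Finset.sum_update_sub_sum (fun j e => Γ.lam j * Γ.gain c j (Γ.rocPt j e)) d i e

variable {Γ c}

lemma IsEquilibrium.gain_le {d : GrpI → ((j : Fin N) → Xs j) → ℝ} (heq : Γ.IsEquilibrium c d)
    (i : GrpI) {p : ℝ × ℝ} (hp : p ∈ Γ.roc) : Γ.gain c i p ≤ Γ.gain c i (Γ.rocPt i (d i)) := by
  obtain ⟨hpol, -, hopt⟩ := heq
  obtain ⟨e, he, rfl⟩ := Γ.exists_rocPt_eq hp i
  have hle := hopt _ (hpol.update he i)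
  have hsub := Γ.UF_update_sub c d i e
  exact le_of_sub_nonpos <| nonpos_of_mul_nonpos_right (by linarith) (Γ.lam_pos i)

lemma mem_EOset_muRE_iff {d : GrpI → ((j : Fin N) → Xs j) → ℝ} :
    d ∈ EOset (Γ.muRE c) (Γ.fRE c) ↔
      IsPolicy d ∧ ∀ i i', (Γ.rocPt i (d i)).1 = (Γ.rocPt i' (d i')).1 := by
  simp only [EOset, mem_ofPred_eq, TP_muRE]
  refine and_congr_right fun _ => ⟨fun h i i' => ?_, fun h => h _ _⟩
  cases i <;> cases i' <;> simp [h]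

variable {dh : GrpI → ((j : Fin N) → Xs j) → ℝ}

lemma snd_rocPt_le_of_mem_Smax_EOset (hdh : dh ∈ Γ.Smax EOset (Γ.muRE c) (Γ.fRE c))
    (i : GrpI) {p : ℝ × ℝ} (hp : p ∈ Γ.roc) (hp1 : p.1 = (Γ.rocPt i (dh i)).1) :
    (Γ.rocPt i (dh i)).2 ≤ p.2 := by
  obtain ⟨hmem, hmax⟩ := hdh
  obtain ⟨hpol, hEO⟩ := mem_EOset_muRE_iff.1 hmem
  obtain ⟨e, he, rfl⟩ := Γ.exists_rocPt_eq hp i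
  have hfst : ∀ j, (Γ.rocPt j (Function.update dh i e j)).1 = (Γ.rocPt j (dh j)).1 := by
    intro j
    rcases eq_or_ne j i with rfl | hj
    · simpa using hp1
    · rw [Function.update_of_ne hj]
  have hle := hmax _ (mem_EOset_muRE_iff.2 ⟨hpol.update he i, fun j j' => by
    rw [hfst, hfst, hEO]⟩)
  have hsub := Γ.UF_update_sub c dh i e
  have hgain : Γ.gain c i (Γ.rocPt i e) - Γ.gain c i (Γ.rocPt i (dh i)) =
      (1 - Γ.G (c i)) * Γ.vu * ((Γ.rocPt i (dh i)).2 - (Γ.rocPt i e).2) := by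
    rw [gain, gain, hp1]
    ring
  have hpos : 0 < (1 - Γ.G (c i)) * Γ.vu := mul_pos (sub_pos.2 (Γ.G_lt_one _)) Γ.vu_pos
  rw [hgain] at hsub
  exact sub_nonpos.1 <| nonpos_of_mul_nonpos_right
    (nonpos_of_mul_nonpos_right (by linarith) (Γ.lam_pos i)) hpos

lemma rocPt_eq_of_mem_Smax_EOset (hdh : dh ∈ Γ.Smax EOset (Γ.muRE c) (Γ.fRE c))
    (i i' : GrpI) : Γ.rocPt i (dh i) = Γ.rocPt i' (dh i') := by
  have hpol := hdh.1.1
  have hEO := (mem_EOset_muRE_iff.1 hdh.1).2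
  exact Prod.ext (hEO i i') <| le_antisymm
    (snd_rocPt_le_of_mem_Smax_EOset hdh i (Γ.rocPt_mem_roc i' (hpol i')) (hEO i' i))
    (snd_rocPt_le_of_mem_Smax_EOset hdh i' (Γ.rocPt_mem_roc i (hpol i)) (hEO i i'))

/-- Using the same ROC point `p` in both groups is a feasible policy under equal opportunity. -/
lemma sum_gain_le_of_mem_Smax_EOset (hdh : dh ∈ Γ.Smax EOset (Γ.muRE c) (Γ.fRE c))
    (i : GrpI) {p : ℝ × ℝ} (hp : p ∈ Γ.roc) :
    ∑ j, Γ.lam j * Γ.gain c j p ≤ ∑ j, Γ.lam j * Γ.gain c j (Γ.rocPt i (dh i)) := by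
  choose e he hep using Γ.exists_rocPt_eq hp
  have hle := hdh.2 e (mem_EOset_muRE_iff.2 ⟨he, fun j j' => by rw [hep, hep]⟩)
  simpa only [UF_muRE, hep, rocPt_eq_of_mem_Smax_EOset hdh _ i] using hle

lemma le_of_gain_le {hi lo : GrpI} (hc : c lo < c hi) {p q : ℝ × ℝ}
    (hh : Γ.gain c hi p ≤ Γ.gain c hi q) (hl : Γ.gain c lo q ≤ Γ.gain c lo p) : p ≤ q := by
  have hG := Γ.G_strictMono hc
  unfold gain at hh hl
  obtain ⟨h1, h2⟩ := single_crossing (mul_pos (Γ.G_pos (c lo)) Γ.vq_pos)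
    (mul_pos (sub_pos.2 (Γ.G_lt_one (c hi))) Γ.vu_pos)
    (mul_lt_mul_of_pos_right hG Γ.vq_pos)
    (mul_lt_mul_of_pos_right (sub_lt_sub_left hG 1) Γ.vu_pos)
    (x := q.1 - p.1) (y := q.2 - p.2) (by linarith) (by linarith)
  exact ⟨sub_nonneg.1 h1, sub_nonneg.1 h2⟩

lemma snd_le_fst_of_forall_gain_le (i : GrpI) {P : ℝ × ℝ} (hP : P ∈ Γ.roc)
    (hopt : ∀ p ∈ Γ.roc, Γ.gain c i p ≤ Γ.gain c i P) : P.2 ≤ P.1 := by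
  have h := hopt _ (Γ.diag_mem_roc (Γ.snd_mem_Icc_of_mem_roc hP))
  unfold gain at h
  exact le_of_mul_le_mul_left (by linarith) (mul_pos (Γ.G_pos (c i)) Γ.vq_pos)

lemma uIcc_AR_ssubset {d : GrpI → ((j : Fin N) → Xs j) → ℝ} (heq : Γ.IsEquilibrium c d)
    (hdh : dh ∈ Γ.Smax EOset (Γ.muRE c) (Γ.fRE c)) {hi lo : GrpI} (hc : c lo < c hi) :
    uIcc (AR hi dh (Γ.muRE c)) (AR lo dh (Γ.muRE c)) ⊂
      uIcc (AR hi d (Γ.muRE c)) (AR lo d (Γ.muRE c)) := by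
  have hne : hi ≠ lo := by rintro rfl; exact hc.false
  set Ph := Γ.rocPt hi (d hi)
  set Pl := Γ.rocPt lo (d lo)
  set Q := Γ.rocPt hi (dh hi)
  have hmem : ∀ i, Γ.rocPt i (d i) ∈ Γ.roc := fun i => Γ.rocPt_mem_roc i (heq.1 i)
  have hQ : Q ∈ Γ.roc := Γ.rocPt_mem_roc hi (hdh.1.1 hi)
  have hfair : ∀ p ∈ Γ.roc, Γ.lam hi * Γ.gain c hi p + Γ.lam lo * Γ.gain c lo p ≤
      Γ.lam hi * Γ.gain c hi Q + Γ.lam lo * Γ.gain c lo Q := fun p hp => by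
    simpa only [GrpI.sum_eq_add hne] using sum_gain_le_of_mem_Smax_EOset hdh hi hp
  have hPlQ : Pl ≤ Q := le_of_gain_le hc
    (le_of_weighted_add_le (Γ.lam_pos lo).le (Γ.lam_pos hi) (heq.gain_le lo hQ)
      (by linarith [hfair Pl (hmem lo)]))
    (heq.gain_le lo hQ)
  have hQPh : Q ≤ Ph := le_of_gain_le hc (heq.gain_le hi hQ)
    (le_of_weighted_add_le (Γ.lam_pos hi).le (Γ.lam_pos lo) (heq.gain_le hi hQ)
      (hfair Ph (hmem hi)))
  have hB : Pl.1 - Pl.2 < Ph.1 - Ph.2 := by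
    have hc' := hc
    rw [Γ.eq_of_bestResponds heq.2.1 lo, Γ.eq_of_bestResponds heq.2.1 hi] at hc'
    exact lt_of_mul_lt_mul_left hc' Γ.om_pos.le
  rw [AR_muRE, AR_muRE, AR_muRE, AR_muRE, rocPt_eq_of_mem_Smax_EOset hdh lo hi]
  exact uIcc_acceptanceRate_ssubset (Γ.G_pos _) (Γ.G_strictMono hc) (Γ.G_lt_one _) hPlQ hQPh
    (snd_le_fst_of_forall_gain_le lo (hmem lo) fun p hp => heq.gain_le lo hp) hB

end Game

theorem equal_opportunity_gains_to_discriminated_general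
    {N : ℕ} {Xs : Fin N → Type} [∀ j, Fintype (Xs j)] [∀ j, Nonempty (Xs j)]
    (Γ : Game N Xs)
    (c : GrpI → ℝ) (d : GrpI → ((j : Fin N) → Xs j) → ℝ)
    (heq : Γ.IsEquilibrium c d) (hdisc : c GrpI.w ≠ c GrpI.b)
    (dh : GrpI → ((j : Fin N) → Xs j) → ℝ)
    (hmem : dh ∈ EOset (Γ.muRE c) (Γ.fRE c))
    (hmax : ∀ d' ∈ EOset (Γ.muRE c) (Γ.fRE c),
      Γ.UF d' (Γ.muRE c) (Γ.fRE c) ≤ Γ.UF dh (Γ.muRE c) (Γ.fRE c)) :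
    Set.Icc (min (AR GrpI.w dh (Γ.muRE c)) (AR GrpI.b dh (Γ.muRE c)))
        (max (AR GrpI.w dh (Γ.muRE c)) (AR GrpI.b dh (Γ.muRE c))) ⊂
      Set.Icc (min (AR GrpI.w d (Γ.muRE c)) (AR GrpI.b d (Γ.muRE c)))
        (max (AR GrpI.w d (Γ.muRE c)) (AR GrpI.b d (Γ.muRE c))) := by
  have hdh : dh ∈ Γ.Smax EOset (Γ.muRE c) (Γ.fRE c) := ⟨hmem, hmax⟩
  rcases hdisc.lt_or_gt with hc | hc
  · have h := Game.uIcc_AR_ssubset heq hdh hc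
    rwa [uIcc_comm (AR GrpI.b dh _), uIcc_comm (AR GrpI.b d _)] at h
  · exact Game.uIcc_AR_ssubset heq hdh hc

/-- **Theorem 1 (property 1).** Under the equal opportunity control, in any
discriminatory equilibrium every firm-optimal decision policy strictly shrinks
the interval between the two groups' acceptance rates: the equal opportunity
control brings gains to the discriminated group. -/
theorem equal_opportunity_gains_to_discriminated
    {N : ℕ} {Xs : Fin N → Type} [∀ j, Fintype (Xs j)] [∀ j, Nonempty (Xs j)]
    (Γ : Game N Xs) (hone : Γ.OneNotLV)
    (c : GrpI → ℝ) (d : GrpI → ((j : Fin N) → Xs j) → ℝ)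
    (heq : Γ.IsEquilibrium c d) (hdisc : c GrpI.w ≠ c GrpI.b)
    (dh : GrpI → ((j : Fin N) → Xs j) → ℝ)
    (hmem : dh ∈ EOset (Γ.muRE c) (Γ.fRE c))
    (hmax : ∀ d' ∈ EOset (Γ.muRE c) (Γ.fRE c),
      Γ.UF d' (Γ.muRE c) (Γ.fRE c) ≤ Γ.UF dh (Γ.muRE c) (Γ.fRE c)) :
    Set.Icc (min (AR GrpI.w dh (Γ.muRE c)) (AR GrpI.b dh (Γ.muRE c)))
        (max (AR GrpI.w dh (Γ.muRE c)) (AR GrpI.b dh (Γ.muRE c))) ⊂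
      Set.Icc (min (AR GrpI.w d (Γ.muRE c)) (AR GrpI.b d (Γ.muRE c)))
        (max (AR GrpI.w d (Γ.muRE c)) (AR GrpI.b d (Γ.muRE c))) :=
  equal_opportunity_gains_to_discriminated_general Γ c d heq hdisc dh hmem hmax
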